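/- For every integer n ≥ 19 and every integer m with 0 ≤ m ≤ (n−1)/2 if n is odd, respectively 0 ≤ m ≤ (n−4)/2 if n is even, there exists a partition p of n such that λ(p) = m, the largest part of p is at most (n + 1)/2, and the number of parts of p is at most (n + 1)/2. -/

import Mathlib

/-- `λ(p) = (1/2)·Σ_{j=1}^k n_j·(n_j − 2j + 1)` for a finite sequence of naturals. -/
def transLam (L : List ℕ) : ℚ :=
  (∑ j ∈ Finset.range L.length,
    (L.getD j 0 : ℚ) * ((L.getD j 0 : ℚ) - 2 * ((j : ℚ) + 1) + 1)) / 2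

/-- A partition of `n`: a nonincreasing list of positive integers summing to `n`. -/
def IsPartitionOf (n : ℕ) (L : List ℕ) : Prop :=
  L.Pairwise (· ≥ ·) ∧ (∀ x ∈ L, 0 < x) ∧ L.sum = n

/-!
Read `λ(p)` as the content sum `Σ (column − row)` over the cells of the Young diagram of `p`.
Two moves change it predictably and keep the diagram inside the square of side `(n+1)/2`:
the *hook extension* adds a cell to the first row and a new last row `1` (`n` grows by 2 and
`λ` by `first part − number of parts`), and the *domino insertion* adds a cell to each of the
first two rows and a new row `2` below the other parts `≥ 2` (`n` grows by 4). The increments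
stay constant when domino insertions are followed by hook extensions, so starting from nine
small seeds on which they are 0 or 1 every admissible `(n, m)` is reached.
-/

open List

theorem transLam_nil : transLam [] = 0 := by simp [transLam]

theorem transLam_append_singleton (X : List ℕ) (y : ℕ) :
    transLam (X ++ [y]) = transLam X + y * (y - 2 * X.length - 1) / 2 := by
  unfold transLam
  rw [length_append, length_singleton, Finset.sum_range_succ,
    getD_append_right _ _ _ _ le_rfl, Nat.sub_self]
  rw [Finset.sum_congr rfl fun j hj => by rw [getD_append _ _ _ _ (Finset.mem_range.mp hj)]]
  simp only [getD_cons_zero]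
  ring

-- Moving `Y` down by `X.length` rows lowers each of its contents by `X.length`.
theorem transLam_append (X Y : List ℕ) :
    transLam (X ++ Y) = transLam X + transLam Y - X.length * Y.sum := by
  induction Y using List.reverseRecOn with
  | nil => simp [transLam_nil]
  | append_singleton Y y ih =>
    rw [← append_assoc, transLam_append_singleton, transLam_append_singleton, ih]
    simp only [length_append, sum_append, sum_singleton]
    push_cast
    ring

theorem transLam_singleton (x : ℕ) : transLam [x] = x * (x - 1) / 2 := by
  simpa [transLam_nil] using transLam_append_singleton [] x

theorem transLam_cons (x : ℕ) (t : List ℕ) :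
    transLam (x :: t) = x * (x - 1) / 2 + transLam t - t.sum := by
  rw [← singleton_append, transLam_append, transLam_singleton]
  simp

theorem transLam_replicate (k r : ℕ) : transLam (replicate k r) = r * k * (r - k) / 2 := by
  induction k with
  | zero => simp [transLam_nil]
  | succ k ih =>
    rw [replicate_succ', transLam_append_singleton, ih, length_replicate]
    push_cast
    ring

theorem transLam_hookExtend (a e : ℕ) (t : List ℕ) :
    transLam ((a + e) :: (t ++ replicate e 1)) =
      transLam (a :: t) + e * ((a : ℚ) - (t.length + 1)) := by
  simp only [transLam_cons, transLam_append, transLam_replicate, sum_append, sum_replicate,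
    smul_eq_mul]
  push_cast
  ring

theorem transLam_dominoInsert (a b c : ℕ) (M T : List ℕ) :
    transLam ((a + c) :: (b + c) :: (M ++ replicate c 2 ++ T)) =
      transLam (a :: b :: (M ++ T)) +
        c * ((a : ℚ) + b - 2 * M.length - T.sum - 4) := by
  simp only [transLam_cons, transLam_append, transLam_replicate, sum_append, sum_replicate,
    length_append, length_replicate, sum_cons, smul_eq_mul]
  push_cast
  ring

theorem pairwise_ge_hookExtend {a : ℕ} {t : List ℕ} (h : (a :: t).Pairwise (· ≥ ·))
    (hpos : ∀ x ∈ a :: t, 0 < x) (e : ℕ) :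
    ((a + e) :: (t ++ replicate e 1)).Pairwise (· ≥ ·) := by
  obtain ⟨hta, hts⟩ := pairwise_cons.1 h
  have ha := hpos a mem_cons_self
  refine pairwise_cons.2 ⟨fun y hy => ?_, pairwise_append.2
    ⟨hts, pairwise_replicate.2 (.inr le_rfl), fun x hx y hy => ?_⟩⟩
  · rcases mem_append.1 hy with hy | hy
    · have := hta y hy; omega
    · rw [eq_of_mem_replicate hy]; omega
  · rw [eq_of_mem_replicate hy]; exact hpos x (mem_cons_of_mem a hx)

theorem pairwise_ge_dominoInsert {a b : ℕ} {M T : List ℕ}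
    (h : (a :: b :: (M ++ T)).Pairwise (· ≥ ·)) (hb : 2 ≤ b) (hM : ∀ x ∈ M, 2 ≤ x)
    (hT : ∀ x ∈ T, x ≤ 2) (c : ℕ) :
    ((a + c) :: (b + c) :: (M ++ replicate c 2 ++ T)).Pairwise (· ≥ ·) := by
  obtain ⟨hab, hb_ge, hMT_sorted⟩ : b ≤ a ∧ (∀ y ∈ M ++ T, y ≤ b) ∧ (M ++ T).Pairwise (· ≥ ·) := by
    simp only [pairwise_cons, mem_cons, forall_eq_or_imp] at h
    exact ⟨h.1.1, h.2.1, h.2.2⟩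
  obtain ⟨hMs, hTs, hMT⟩ := pairwise_append.1 hMT_sorted
  have hL : (M ++ replicate c 2 ++ T).Pairwise (· ≥ ·) := by
    refine pairwise_append.2 ⟨pairwise_append.2 ⟨hMs, pairwise_replicate.2 (.inr le_rfl), ?_⟩,
      hTs, ?_⟩
    · intro x hx y hy
      rw [eq_of_mem_replicate hy]
      exact hM x hx
    · intro x hx y hy
      rcases mem_append.1 hx with hx | hx
      · exact hMT x hx y hy
      · rw [eq_of_mem_replicate hx]
        exact hT y hy
  have hLb : ∀ y ∈ M ++ replicate c 2 ++ T, y ≤ b := by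
    intro y hy
    rcases mem_append.1 hy with hy | hy
    · rcases mem_append.1 hy with hy | hy
      · exact hb_ge y (mem_append_left T hy)
      · rw [eq_of_mem_replicate hy]; exact hb
    · exact hb_ge y (mem_append_right M hy)
  refine pairwise_cons.2 ⟨fun y hy => ?_, pairwise_cons.2 ⟨fun y hy => ?_, hL⟩⟩
  · rcases mem_cons.1 hy with rfl | hy
    · omega
    · have := hLb y hy; omega
  · have := hLb y hy; omega

theorem two_mul_le_of_pairwise_ge {x k : ℕ} {l : List ℕ} (h : (x :: l).Pairwise (· ≥ ·))
    (hx : 2 * x ≤ k) : ∀ y ∈ x :: l, 2 * y ≤ k := by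
  intro y hy
  rcases mem_cons.1 hy with rfl | hy
  · exact hx
  · have := (pairwise_cons.1 h).1 y hy; omega

def IsBoxedPartition (n m : ℕ) (L : List ℕ) : Prop :=
  IsPartitionOf n L ∧ transLam L = m ∧ (∀ x ∈ L, 2 * x ≤ n + 1) ∧ 2 * L.length ≤ n + 1

namespace IsBoxedPartition

variable {n m n' m' a b c d e : ℕ} {t M T : List ℕ}

theorem hookExtend (h : IsBoxedPartition n m (a :: t)) (hd : a = t.length + 1 + d)
    (hn : n' = n + 2 * e) (hm : m' = m + e * d) :
    IsBoxedPartition n' m' ((a + e) :: (t ++ replicate e 1)) := by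
  obtain ⟨⟨hsorted, hpos, hsum⟩, hlam, hparts, hlen⟩ := h
  subst hn hm
  refine ⟨⟨pairwise_ge_hookExtend hsorted hpos e, ?_, ?_⟩, ?_,
    two_mul_le_of_pairwise_ge (pairwise_ge_hookExtend hsorted hpos e) ?_, ?_⟩
  · intro x hx
    simp only [mem_cons, mem_append, mem_replicate] at hx
    rcases hx with rfl | hx | ⟨-, rfl⟩
    · exact Nat.add_pos_left (hpos a mem_cons_self) e
    · exact hpos x (mem_cons_of_mem a hx)
    · exact one_pos
  · simp only [sum_cons, sum_append, sum_replicate, smul_eq_mul] at hsum ⊢; omega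
  · rw [transLam_hookExtend, hlam, hd]; push_cast; ring
  · have := hparts a mem_cons_self; omega
  · simp only [length_cons, length_append, length_replicate] at hlen ⊢; omega

theorem dominoInsert (h : IsBoxedPartition n m (a :: b :: (M ++ T))) (hb : 2 ≤ b)
    (hM : ∀ x ∈ M, 2 ≤ x) (hT : ∀ x ∈ T, x ≤ 2) (hd : a + b = 2 * M.length + T.sum + 4 + d)
    (hn : n' = n + 4 * c) (hm : m' = m + c * d) :
    IsBoxedPartition n' m' ((a + c) :: (b + c) :: (M ++ replicate c 2 ++ T)) := by
  obtain ⟨⟨hsorted, hpos, hsum⟩, hlam, hparts, hlen⟩ := h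
  subst hn hm
  refine ⟨⟨pairwise_ge_dominoInsert hsorted hb hM hT c, ?_, ?_⟩, ?_,
    two_mul_le_of_pairwise_ge (pairwise_ge_dominoInsert hsorted hb hM hT c) ?_, ?_⟩
  · intro x hx
    simp only [mem_cons, mem_append, mem_replicate] at hx
    rcases hx with rfl | rfl | (hx | ⟨-, rfl⟩) | hx
    · exact Nat.add_pos_left (hpos a mem_cons_self) c
    · omega
    · have := hM x hx; omega
    · exact two_pos
    · exact hpos x (by simp [hx])
  · simp only [sum_cons, sum_append, sum_replicate, smul_eq_mul] at hsum ⊢; omega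
  · rw [transLam_dominoInsert, hlam]
    have hd' : (a : ℚ) + b = 2 * M.length + T.sum + 4 + d := by exact_mod_cast hd
    push_cast at hd' ⊢
    linear_combination c * hd'
  · have := hparts a mem_cons_self; omega
  · simp only [length_cons, length_append, length_replicate] at hlen ⊢; omega

theorem exists_of_dominoInsert_hookExtend (h : IsBoxedPartition n m (a :: b :: (M ++ T)))
    (hb : 2 ≤ b) (hM : ∀ x ∈ M, 2 ≤ x) (hT : ∀ x ∈ T, x ≤ 2) {d₁ d₂ : ℕ}
    (hd₁ : a = M.length + T.length + 2 + d₁) (hd₂ : a + b = 2 * M.length + T.sum + 4 + d₂)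
    (hn : n' = n + 4 * c + 2 * e) (hm : m' = m + c * d₂ + e * d₁) :
    ∃ L, IsBoxedPartition n' m' L :=
  ⟨_, (h.dominoInsert hb hM hT hd₂ rfl rfl).hookExtend
    (by simp only [length_cons, length_append, length_replicate]; omega) hn hm⟩

end IsBoxedPartition

theorem exists_isBoxedPartition_odd {N m : ℕ} (hN : 9 ≤ N) (hm : m ≤ N) :
    ∃ L, IsBoxedPartition (2 * N + 1) m L := by
  obtain ⟨h1, h331, h32, h55531⟩ : IsBoxedPartition 1 0 [1] ∧ IsBoxedPartition 7 1 [3, 3, 1] ∧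
      IsBoxedPartition 5 2 [3, 2] ∧ IsBoxedPartition 19 5 [5, 5, 5, 3, 1] := by
    norm_num [IsBoxedPartition, IsPartitionOf, transLam_cons, transLam_nil]
  obtain rfl | hm0 : m = 0 ∨ 1 ≤ m := by omega
  · exact ⟨_, h1.hookExtend (t := []) (d := 0) (e := N) rfl (by ring) rfl⟩
  by_cases hsmall : 2 * m + 1 ≤ N
  · exact h331.exists_of_dominoInsert_hookExtend (M := []) (T := [1]) (d₁ := 0) (d₂ := 1)
      (c := m - 1) (e := N - 2 * m - 1) (by decide) (by decide) (by decide) rfl rfl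
      (by omega) (by omega)
  by_cases hlarge : N + 2 ≤ 2 * m
  · exact h32.exists_of_dominoInsert_hookExtend (M := []) (T := []) (d₁ := 1) (d₂ := 1)
      (c := N - m) (e := 2 * m - 2 - N) (by decide) (by decide) (by decide) rfl rfl
      (by omega) (by omega)
  · exact h55531.exists_of_dominoInsert_hookExtend (M := [5, 3]) (T := [1]) (d₁ := 0) (d₂ := 1)
      (c := m - 5) (e := N + 1 - 2 * m) (by decide) (by decide) (by decide) rfl rfl
      (by omega) (by omega)

theorem exists_isBoxedPartition_even {N m : ℕ} (hN : 10 ≤ N) (hm : m + 2 ≤ N) :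
    ∃ L, IsBoxedPartition (2 * N) m L := by
  obtain ⟨h332, h4442, h4431, h433, h55541⟩ : IsBoxedPartition 8 0 [3, 3, 2] ∧
      IsBoxedPartition 14 1 [4, 4, 4, 2] ∧ IsBoxedPartition 12 2 [4, 4, 3, 1] ∧
      IsBoxedPartition 10 3 [4, 3, 3] ∧ IsBoxedPartition 20 5 [5, 5, 5, 4, 1] := by
    norm_num [IsBoxedPartition, IsPartitionOf, transLam_cons, transLam_nil]
  obtain rfl | rfl | hm2 : m = 0 ∨ m = 1 ∨ 2 ≤ m := by omega
  · exact ⟨_, h332.hookExtend (d := 0) (e := N - 4) rfl (by omega) rfl⟩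
  · exact ⟨_, h4442.hookExtend (d := 0) (e := N - 7) rfl (by omega) rfl⟩
  by_cases hsmall : 2 * m + 2 ≤ N
  · exact h4431.exists_of_dominoInsert_hookExtend (M := [3]) (T := [1]) (d₁ := 0) (d₂ := 1)
      (c := m - 2) (e := N - 2 * m - 2) (by decide) (by decide) (by decide) rfl rfl
      (by omega) (by omega)
  by_cases hlarge : N + 1 ≤ 2 * m
  · exact h433.exists_of_dominoInsert_hookExtend (M := [3]) (T := []) (d₁ := 1) (d₂ := 1)
      (c := N - m - 2) (e := 2 * m - 1 - N) (by decide) (by decide) (by decide) rfl rfl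
      (by omega) (by omega)
  · exact h55541.exists_of_dominoInsert_hookExtend (M := [5, 4]) (T := [1]) (d₁ := 0) (d₂ := 1)
      (c := m - 5) (e := N - 2 * m) (by decide) (by decide) (by decide) rfl rfl
      (by omega) (by omega)

theorem segment_S1_with_bounds (n : ℕ) (hn : 19 ≤ n) (m : ℕ)
    (hodd : Odd n → 2 * m ≤ n - 1) (heven : Even n → 2 * m ≤ n - 4) :
    ∃ L : List ℕ, IsPartitionOf n L ∧ transLam L = (m : ℚ) ∧
      (∀ x ∈ L, 2 * x ≤ n + 1) ∧ 2 * L.length ≤ n + 1 := by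
  obtain ⟨N, rfl | rfl⟩ := Nat.even_or_odd' n
  · have := heven (even_two_mul N)
    exact exists_isBoxedPartition_even (by omega) (by omega)
  · have := hodd (odd_two_mul_add_one N)
    exact exists_isBoxedPartition_odd (by omega) (by omega)
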